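/- arXiv:1002.2246 — 4 statements merged into one kernel-verified Lean document; each statement's English description precedes it below -/
import Mathlib

section
/- For a reversible irreducible finite Markov chain, hitting times satisfy the cycle identity: for any three states i, j, k, H(i,j) + H(j,k) + H(k,i) = H(i,k) + H(k,j) + H(j,i). -/
/-!
Write `L = I - P` and `ψ(a) = ∑ i, π i * H(i,a)`. The hitting system says that `L H(·,a)` is `1`
away from `a` and `1 - R(a)` at `a`, where the mean return time satisfies `π a * R(a) = 1` by
stationarity (Kac's formula).
Reversibility makes `L` self-adjoint for the `π`-weighted inner product, so pairing `H(·,x)` with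
`L H(·,y)` and `H(·,y)` with `L H(·,x)` gives the same number; comparing the two evaluations yields
`ψ(x) + H(x,y) = ψ(y) + H(y,x)`, and the cycle identity telescopes.
-/

open Finset

variable {ι : Type*} [Fintype ι] {P : Matrix ι ι ℝ} {π : ι → ℝ}

theorem sum_mul_sum_mul_of_stationary (hstat : ∀ j, ∑ i, π i * P i j = π j) (f : ι → ℝ) :
    ∑ i, π i * ∑ k, P i k * f k = ∑ k, π k * f k := by
  simp_rw [mul_sum, ← mul_assoc]
  rw [sum_comm]
  simp_rw [← sum_mul, hstat]

theorem sum_mul_mul_sum_comm_of_reversible (hrev : ∀ i j, π i * P i j = π j * P j i)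
    (f g : ι → ℝ) :
    ∑ i, π i * f i * ∑ k, P i k * g k = ∑ i, π i * g i * ∑ k, P i k * f k := by
  simp_rw [mul_sum]
  rw [sum_comm]
  refine sum_congr rfl fun i _ => sum_congr rfl fun k _ => ?_
  linear_combination f k * g i * hrev k i

section HittingTimes

variable [DecidableEq ι] {H : ι → ι → ℝ}

def meanReturnTime (P : Matrix ι ι ℝ) (H : ι → ι → ℝ) (j : ι) : ℝ :=
  1 + ∑ k, P j k * H k j

theorem one_add_sum_mul_hittingTime (hH0 : ∀ j, H j j = 0)
    (hH : ∀ i j, i ≠ j → H i j = 1 + ∑ k, P i k * H k j) (i j : ι) :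
    1 + ∑ k, P i k * H k j = H i j + if i = j then meanReturnTime P H j else 0 := by
  by_cases hij : i = j
  · subst hij
    simp [hH0, meanReturnTime]
  · simp [hij, hH i j hij]

theorem mul_meanReturnTime_eq_one (hπsum : ∑ i, π i = 1)
    (hstat : ∀ j, ∑ i, π i * P i j = π j) (hH0 : ∀ j, H j j = 0)
    (hH : ∀ i j, i ≠ j → H i j = 1 + ∑ k, P i k * H k j) (j : ι) :
    π j * meanReturnTime P H j = 1 := by
  have hsum := sum_mul_sum_mul_of_stationary hstat (H · j)
  calc π j * meanReturnTime P H j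
      = ∑ i, π i * (1 + ∑ k, P i k * H k j) - ∑ i, π i * H i j := by
        simp_rw [one_add_sum_mul_hittingTime hH0 hH, mul_add, sum_add_distrib, mul_ite, mul_zero,
          sum_ite_eq', mem_univ, if_true]
        ring
    _ = 1 := by
        simp_rw [mul_add, mul_one, sum_add_distrib, hπsum, hsum]
        ring

theorem sum_mul_hittingTime_add_hittingTime_symm (hπsum : ∑ i, π i = 1)
    (hstat : ∀ j, ∑ i, π i * P i j = π j) (hrev : ∀ i j, π i * P i j = π j * P j i)
    (hH0 : ∀ j, H j j = 0) (hH : ∀ i j, i ≠ j → H i j = 1 + ∑ k, P i k * H k j) (x y : ι) :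
    ∑ i, π i * H i x + H x y = ∑ i, π i * H i y + H y x := by
  have hpair : ∀ a b, ∑ i, π i * H i a * (1 + ∑ k, P i k * H k b)
      = ∑ i, π i * H i a + ∑ i, π i * H i a * ∑ k, P i k * H k b := fun a b => by
    simp_rw [mul_add, mul_one, sum_add_distrib]
  have hhit : ∀ a b, ∑ i, π i * H i a * (1 + ∑ k, P i k * H k b)
      = ∑ i, π i * (H i a * H i b) + H b a := fun a b => by
    simp_rw [one_add_sum_mul_hittingTime hH0 hH, mul_add, sum_add_distrib, mul_ite, mul_zero,
      sum_ite_eq', mem_univ, if_true]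
    rw [mul_right_comm, mul_meanReturnTime_eq_one hπsum hstat hH0 hH, one_mul]
    simp_rw [mul_assoc]
  have hcomm : ∑ i, π i * (H i x * H i y) = ∑ i, π i * (H i y * H i x) := by
    simp_rw [mul_comm (H _ x)]
  linarith [hpair x y, hpair y x, hhit x y, hhit y x,
    sum_mul_mul_sum_comm_of_reversible hrev (H · x) (H · y)]

end HittingTimes

theorem reversible_cycle_identity_general (n : ℕ)
    (P : Matrix (Fin n) (Fin n) ℝ)
    (π : Fin n → ℝ) (hπsum : ∑ i, π i = 1)
    (hstat : ∀ j, ∑ i, π i * P i j = π j)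
    (hrev : ∀ i j, π i * P i j = π j * P j i)
    (H : Fin n → Fin n → ℝ)
    (hH0 : ∀ j, H j j = 0)
    (hH : ∀ i j, i ≠ j → H i j = 1 + ∑ k, P i k * H k j) :
    ∀ i j k, H i j + H j k + H k i = H i k + H k j + H j i := by
  intro i j k
  have key := sum_mul_hittingTime_add_hittingTime_symm hπsum hstat hrev hH0 hH
  linarith [key i j, key j k, key k i]

/-- For a finite irreducible Markov chain that is reversible with respect to a
(positive) stationary distribution `π`, the hitting times `H` (characterized by
their harmonic system) satisfy the cycle identity
`H(i,j) + H(j,k) + H(k,i) = H(i,k) + H(k,j) + H(j,i)`. -/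
theorem reversible_cycle_identity (n : ℕ) (hn : 0 < n)
    (P : Matrix (Fin n) (Fin n) ℝ)
    (hnn : ∀ i j, 0 ≤ P i j) (hrow : ∀ i, ∑ j, P i j = 1)
    (hirr : ∀ i j, ∃ k : ℕ, 0 < (P ^ k) i j)
    (π : Fin n → ℝ) (hπpos : ∀ i, 0 < π i) (hπsum : ∑ i, π i = 1)
    (hstat : ∀ j, ∑ i, π i * P i j = π j)
    (hrev : ∀ i j, π i * P i j = π j * P j i)
    (H : Fin n → Fin n → ℝ)
    (hH0 : ∀ j, H j j = 0)
    (hH : ∀ i j, i ≠ j → H i j = 1 + ∑ k, P i k * H k j) :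
    ∀ i j k, H i j + H j k + H k i = H i k + H k j + H j i :=
  reversible_cycle_identity_general n P π hπsum hstat hrev H hH0 hH
end

section
/- Consider two tokens placed on a fixed undirected connected graph G on N vertices; at each time step one of the two tokens is chosen uniformly at random and the chosen token moves to a uniformly random neighbor. Then the meeting time M (maximum over starting pairs of the expected time for the tokens to first occupy the same vertex) satisfies M ≤ 2N·H_SF − N, where H_SF is the maximum hitting time of the simple random walk on G. -/
/-!
For a reversible walk the antisymmetric part of the hitting times is a gradient:
`H x y - H y x = ψ y - ψ x` with `ψ y = ∑ v, deg v * H v y / 2|E|`. This is the symmetry of the graph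
Laplacian `L`, because `L H(·, y) = deg - 2|E| δ_y`. Consequently `Φ x y = H x y - ψ y = H y x - ψ x`
drops by exactly one in expectation whichever token moves, so `(N / 2) (Φ + max ψ)` solves the
meeting-time system off the diagonal and dominates it on the diagonal. The maximum principle for the
pair walk then gives `M x y ≤ (N / 2) (H x y + H y z - H z y) ≤ N * Hmax`, where `z` maximizes `ψ`.
-/

open Finset Matrix

namespace SimpleGraph

variable {V : Type*}

theorem Reachable.propagate {G : SimpleGraph V} {a x : V} (h : G.Reachable a x) {P : V → Prop}
    (hstep : ∀ u v, G.Adj u v → u ≠ x → P u → P v) (ha : P a) : P x := by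
  obtain ⟨w⟩ := h
  induction w with
  | nil => exact ha
  | @cons u v x huv _ ih =>
    by_cases hux : u = x
    · exact hux ▸ ha
    · exact ih hstep (hstep u v huv hux ha)

variable [Fintype V] (G : SimpleGraph V) [DecidableRel G.Adj]

noncomputable def nbrAvg (f : V → ℝ) (v : V) : ℝ :=
  ∑ k ∈ G.neighborFinset v, (1 / (G.degree v : ℝ)) * f k

/-- One step of the two-token walk, observed only at the steps where a token moves: each token is
the mover with probability `1 / 2`. -/
noncomputable def pairAvg (F : V → V → ℝ) (x y : V) : ℝ :=
  (G.nbrAvg (fun k => F k y) x + G.nbrAvg (fun k => F x k) y) / 2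

structure IsHittingTime (H : V → V → ℝ) : Prop where
  diag : ∀ j, H j j = 0
  step : ∀ i j, i ≠ j → H i j = 1 + G.nbrAvg (fun k => H k j) i

variable {G}

section nbrAvg

variable {f g : V → ℝ} {v : V}

theorem degree_mul_nbrAvg (f : V → ℝ) (v : V) :
    (G.degree v : ℝ) * G.nbrAvg f v = ∑ k ∈ G.neighborFinset v, f k := by
  rcases (G.degree v).eq_zero_or_pos with hv | hv
  · rw [← card_neighborFinset_eq_degree, card_eq_zero] at hv
    simp [nbrAvg, hv]
  · rw [nbrAvg, mul_sum]
    refine sum_congr rfl fun k _ => ?_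
    field_simp

theorem nbrAvg_const (hv : 0 < G.degree v) (c : ℝ) : G.nbrAvg (fun _ => c) v = c := by
  have : (G.degree v : ℝ) ≠ 0 := by positivity
  rw [nbrAvg, sum_const, card_neighborFinset_eq_degree, nsmul_eq_mul]
  field_simp

theorem nbrAvg_sub (f g : V → ℝ) (v : V) :
    G.nbrAvg (fun k => f k - g k) v = G.nbrAvg f v - G.nbrAvg g v := by
  simp only [nbrAvg, mul_sub, sum_sub_distrib]

theorem nbrAvg_sub_const (hv : 0 < G.degree v) (c : ℝ) :
    G.nbrAvg (fun k => f k - c) v = G.nbrAvg f v - c := by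
  rw [nbrAvg_sub f (fun _ => c), nbrAvg_const hv]

theorem nbrAvg_const_mul (c : ℝ) (f : V → ℝ) (v : V) :
    G.nbrAvg (fun k => c * f k) v = c * G.nbrAvg f v := by
  simp only [nbrAvg, mul_sum, mul_left_comm]

theorem nbrAvg_mono (h : ∀ k, f k ≤ g k) : G.nbrAvg f v ≤ G.nbrAvg g v :=
  sum_le_sum fun k _ => mul_le_mul_of_nonneg_left (h k) (by positivity)

theorem nbrAvg_le (hv : 0 < G.degree v) {c : ℝ} (h : ∀ k, f k ≤ c) : G.nbrAvg f v ≤ c :=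
  (nbrAvg_mono h).trans_eq (nbrAvg_const hv c)

theorem le_nbrAvg (hv : 0 < G.degree v) {c : ℝ} (h : ∀ k, c ≤ f k) : c ≤ G.nbrAvg f v :=
  (nbrAvg_const hv c).symm.trans_le (nbrAvg_mono h)

theorem eq_of_le_nbrAvg (hv : 0 < G.degree v) {c : ℝ} (h : ∀ k, f k ≤ c)
    (hc : c ≤ G.nbrAvg f v) {k : V} (hk : G.Adj v k) : f k = c := by
  have hterm : ∀ l ∈ G.neighborFinset v,
      (1 / (G.degree v : ℝ)) * f l ≤ (1 / (G.degree v : ℝ)) * c :=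
    fun l _ => mul_le_mul_of_nonneg_left (h l) (by positivity)
  have hsum : G.nbrAvg f v = G.nbrAvg (fun _ => c) v :=
    le_antisymm (nbrAvg_mono h) ((nbrAvg_const hv c).trans_le hc)
  have := (sum_eq_sum_iff_of_le hterm).1 hsum k ((G.mem_neighborFinset v k).2 hk)
  have hd : (0 : ℝ) < 1 / (G.degree v : ℝ) := by positivity
  exact mul_left_cancel₀ hd.ne' this

end nbrAvg

theorem pairAvg_sub_const_mul (F Φ : V → V → ℝ) (c : ℝ) (x y : V) :
    G.pairAvg (fun a b => F a b - c * Φ a b) x y = G.pairAvg F x y - c * G.pairAvg Φ x y := by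
  simp only [pairAvg, nbrAvg_sub, nbrAvg_const_mul]
  ring

theorem nonpos_of_le_pairAvg (hconn : G.Connected) (hdeg : ∀ v, 0 < G.degree v)
    {f : V → V → ℝ} (hdiag : ∀ v, f v v ≤ 0)
    (hsub : ∀ x y, x ≠ y → f x y ≤ G.pairAvg f x y) (x y : V) : f x y ≤ 0 := by
  obtain ⟨p, -, hp⟩ := exists_max_image (univ : Finset (V × V)) (fun p => f p.1 p.2)
    ⟨(x, y), mem_univ _⟩
  have hmax : ∀ a b, f a b ≤ f p.1 p.2 := fun a b => hp (a, b) (mem_univ _)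
  -- Along a walk from `p.1` to `p.2`, moving the first token keeps `f` at its maximum.
  have hdiag_max : f p.2 p.2 = f p.1 p.2 := by
    refine (hconn.preconnected p.1 p.2).propagate (P := fun a => f a p.2 = f p.1 p.2)
      (fun u v huv hu hfu => ?_) rfl
    have h₁ := nbrAvg_le (hdeg p.2) (fun k => hmax u k)
    have h₂ := hsub u p.2 hu
    rw [pairAvg] at h₂
    exact eq_of_le_nbrAvg (hdeg u) (fun k => hmax k p.2) (by linarith) huv
  linarith [hmax x y, hdiag p.2]

section Laplacian

variable [DecidableEq V]

theorem dotProduct_lapMatrix_mulVec_comm (u w : V → ℝ) :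
    u ⬝ᵥ (G.lapMatrix ℝ *ᵥ w) = (G.lapMatrix ℝ *ᵥ u) ⬝ᵥ w := by
  rw [dotProduct_mulVec, ← mulVec_transpose, (G.isSymm_lapMatrix (R := ℝ)).eq]

theorem sum_lapMatrix_mulVec (w : V → ℝ) : ∑ v, (G.lapMatrix ℝ *ᵥ w) v = 0 := by
  have := dotProduct_lapMatrix_mulVec_comm (G := G) (fun _ => 1) w
  rw [lapMatrix_mulVec_const_eq_zero, zero_dotProduct] at this
  simpa [dotProduct] using this

theorem IsHittingTime.lapMatrix_mulVec {H : V → V → ℝ} (hH : G.IsHittingTime H) (y v : V) :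
    (G.lapMatrix ℝ *ᵥ fun u => H u y) v
      = G.degree v - if v = y then ∑ w, (G.degree w : ℝ) else 0 := by
  have hoff : ∀ u, u ≠ y → (G.lapMatrix ℝ *ᵥ fun u => H u y) u = G.degree u := by
    intro u hu
    rw [lapMatrix_mulVec_apply, hH.step u y hu, mul_add, degree_mul_nbrAvg]
    ring
  split_ifs with hvy
  · subst hvy
    have hsum := sum_lapMatrix_mulVec (G := G) fun u => H u v
    rw [← add_sum_erase _ _ (mem_univ v),
      sum_congr rfl fun u hu => hoff u (ne_of_mem_erase hu)] at hsum
    rw [← add_sum_erase _ _ (mem_univ v)]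
    linarith
  · rw [hoff v hvy, sub_zero]

end Laplacian

section Hitting

variable {H : V → V → ℝ}

theorem IsHittingTime.sum_degree_mul_sub (hH : G.IsHittingTime H) (x y : V) :
    (∑ w, (G.degree w : ℝ)) * (H x y - H y x)
      = ∑ v, G.degree v * H v y - ∑ v, G.degree v * H v x := by
  classical
  have := dotProduct_lapMatrix_mulVec_comm (G := G) (fun u => H u x) (fun u => H u y)
  simp only [dotProduct, hH.lapMatrix_mulVec, mul_sub, sub_mul, sum_sub_distrib, mul_ite,
    ite_mul, mul_zero, zero_mul, sum_ite_eq', mem_univ, if_true] at this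
  linarith [sum_congr rfl fun v (_ : v ∈ univ) => mul_comm (H v x) (G.degree v : ℝ)]

theorem IsHittingTime.exists_potential (hH : G.IsHittingTime H)
    (hD : (∑ w, (G.degree w : ℝ)) ≠ 0) : ∃ ψ : V → ℝ, ∀ x y, H x y - H y x = ψ y - ψ x :=
  ⟨fun y => (∑ v, G.degree v * H v y) / ∑ w, (G.degree w : ℝ), fun x y => by
    rw [← sub_div, eq_div_iff hD, mul_comm]
    exact hH.sum_degree_mul_sub x y⟩

theorem IsHittingTime.nbrAvg_eq (hH : G.IsHittingTime H) {x y : V} (hxy : x ≠ y) :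
    G.nbrAvg (fun k => H k y) x = H x y - 1 := by
  linarith [hH.step x y hxy]

theorem IsHittingTime.nonneg (hH : G.IsHittingTime H) (hdeg : ∀ v, 0 < G.degree v) (x y : V) :
    0 ≤ H x y := by
  obtain ⟨a, -, ha⟩ := exists_min_image univ (fun v => H v y) ⟨y, mem_univ y⟩
  have hay : a = y := by
    by_contra hay
    linarith [hH.step a y hay, le_nbrAvg (hdeg a) fun k => ha k (mem_univ k)]
  have := ha x (mem_univ x)
  rw [hay, hH.diag] at this
  exact this

theorem IsHittingTime.one_le (hH : G.IsHittingTime H) (hdeg : ∀ v, 0 < G.degree v) {x y : V}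
    (hxy : x ≠ y) : 1 ≤ H x y := by
  linarith [hH.step x y hxy, le_nbrAvg (hdeg x) fun k => hH.nonneg hdeg k y]

theorem IsHittingTime.pairAvg_sub_potential (hH : G.IsHittingTime H)
    (hdeg : ∀ v, 0 < G.degree v) {ψ : V → ℝ} (hψ : ∀ a b, H a b - H b a = ψ b - ψ a)
    {x y : V} (hxy : x ≠ y) :
    G.pairAvg (fun a b => H a b - ψ b) x y = H x y - ψ y - 1 := by
  have hswap : (fun k => H x k - ψ k) = fun k => H k x - ψ x :=
    funext fun k => by linarith [hψ x k]
  rw [pairAvg, hswap, nbrAvg_sub_const (hdeg x), nbrAvg_sub_const (hdeg y), hH.nbrAvg_eq hxy,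
    hH.nbrAvg_eq hxy.symm]
  linarith [hψ x y]

end Hitting

theorem meeting_le_two_mul_of_isHittingTime (hconn : G.Connected) (hdeg : ∀ v, 0 < G.degree v)
    {H : V → V → ℝ} (hH : G.IsHittingTime H) {Hmax : ℝ} (hHmax : ∀ a b, H a b ≤ Hmax)
    {c : ℝ} (hc : 0 ≤ c) {M : V → V → ℝ} (hM0 : ∀ v, M v v = 0)
    (hM : ∀ x y, x ≠ y → M x y = c + G.pairAvg M x y) (x y : V) : M x y ≤ 2 * c * Hmax := by
  have hD : (∑ w, (G.degree w : ℝ)) ≠ 0 :=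
    (sum_pos (fun v _ => by exact_mod_cast hdeg v) ⟨x, mem_univ x⟩).ne'
  obtain ⟨ψ₀, hψ₀⟩ := hH.exists_potential hD
  obtain ⟨z, -, hz⟩ := exists_max_image univ ψ₀ ⟨x, mem_univ x⟩
  set ψ : V → ℝ := fun v => ψ₀ v - ψ₀ z
  have hψ : ∀ a b, H a b - H b a = ψ b - ψ a := fun a b => by simp only [ψ, hψ₀]; ring
  have hcomp : M x y - c * (H x y - ψ y) ≤ 0 := by
    refine nonpos_of_le_pairAvg hconn hdeg (f := fun a b => M a b - c * (H a b - ψ b))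
      (fun v => ?_) (fun a b hab => ?_) x y
    · have : ψ v ≤ 0 := sub_nonpos.2 (hz v (mem_univ v))
      rw [hM0, hH.diag]
      nlinarith
    · rw [pairAvg_sub_const_mul, hH.pairAvg_sub_potential hdeg hψ hab]
      linarith [hM a b hab]
  have hΦ : H x y - ψ y ≤ 2 * Hmax := by
    linarith [hψ y z, hHmax x y, hHmax y z, hH.nonneg hdeg z y]
  nlinarith

theorem pairAvg_eq_of_lazy_step {n : ℝ} (hn : n ≠ 0) {M : V → V → ℝ} {x y : V}
    (h : M x y = 1 + (1 - 2 / n) * M x y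
      + ∑ k ∈ G.neighborFinset x, (1 / (n * G.degree x)) * M k y
      + ∑ k ∈ G.neighborFinset y, (1 / (n * G.degree y)) * M x k) :
    M x y = n / 2 + G.pairAvg M x y := by
  have hscale : ∀ (f : V → ℝ) v,
      ∑ k ∈ G.neighborFinset v, (1 / (n * G.degree v)) * f k = 1 / n * G.nbrAvg f v := by
    intro f v
    simp only [nbrAvg, mul_sum, ← mul_assoc, one_div_mul_one_div]
  rw [hscale, hscale] at h
  rw [pairAvg]
  field_simp at h ⊢
  linarith

end SimpleGraph

open SimpleGraph

/-- Two tokens on a fixed undirected connected graph on `N ≥ 2` vertices: at each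
step one of the two tokens is chosen with probability `1/N` each (so the pair
stays put with probability `1 - 2/N`) and the chosen token moves to a uniformly
random neighbor. The expected meeting times `M` (characterized by their harmonic
system, with `M(i,i) = 0`) satisfy `M(i,j) ≤ 2N·H_SF − N`, where `H_SF` is any
upper bound on the hitting times of the simple random walk on the graph. -/
theorem meeting_time_le_two_N_hitting (N : ℕ) (hN : 2 ≤ N)
    (G : SimpleGraph (Fin N)) [DecidableRel G.Adj] (hconn : G.Connected)
    (HSF : Fin N → Fin N → ℝ)
    (hSF0 : ∀ j, HSF j j = 0)
    (hSF : ∀ i j, i ≠ j →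
      HSF i j = 1 + ∑ k ∈ G.neighborFinset i, (1 / (G.degree i : ℝ)) * HSF k j)
    (Hmax : ℝ) (hHmax : ∀ i j, HSF i j ≤ Hmax)
    (M : Fin N → Fin N → ℝ)
    (hM0 : ∀ i, M i i = 0)
    (hM : ∀ i j, i ≠ j →
      M i j = 1 + (1 - 2 / (N : ℝ)) * M i j
        + ∑ k ∈ G.neighborFinset i, (1 / ((N : ℝ) * G.degree i)) * M k j
        + ∑ k ∈ G.neighborFinset j, (1 / ((N : ℝ) * G.degree j)) * M i k) :
    ∀ i j, M i j ≤ 2 * N * Hmax - N := by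
  have : Nontrivial (Fin N) := Fin.nontrivial_iff_two_le.2 hN
  have hdeg : ∀ v, 0 < G.degree v := fun v => hconn.preconnected.degree_pos_of_nontrivial v
  have hH : G.IsHittingTime HSF := ⟨hSF0, hSF⟩
  have hNpos : (0 : ℝ) < N := by positivity
  have hHmax_one : 1 ≤ Hmax := by
    obtain ⟨a, b, hab⟩ := exists_pair_ne (Fin N)
    exact (hH.one_le hdeg hab).trans (hHmax a b)
  intro i j
  have hMle := meeting_le_two_mul_of_isHittingTime hconn hdeg hH hHmax (by positivity) hM0
    (fun x y hxy => pairAvg_eq_of_lazy_step hNpos.ne' (hM x y hxy)) i j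
  nlinarith
end

section
/- For a reversible irreducible finite Markov chain, the relation on states defined by i ≤ j iff H(i,j) ≤ H(j,i) is total and transitive (a total pre-order); consequently there exists a 'hidden' state u such that H(v,u) ≥ H(u,v) for every state v. -/
/-! The cycle identity says exactly that the antisymmetric part of `H` is a gradient:
fixing a base state `o` and setting `φ i = H i o - H o i`, one has
`H i j - H j i = φ i - φ j`. Hence `i ≤ j ↔ H i j ≤ H j i` is the preorder pulled back from `ℝ`
along `φ`, and a hidden state is a minimiser of `φ` over the finite state space. -/

section CyclePotential

variable {S α : Type*} [AddCommGroup α] [LinearOrder α] [IsOrderedAddMonoid α]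

def cyclePotential (H : S → S → α) (o : S) (i : S) : α := H i o - H o i

theorem sub_swap_eq_cyclePotential_sub {H : S → S → α}
    (hcycle : ∀ i j k, H i j + H j k + H k i = H i k + H k j + H j i) (o i j : S) :
    H i j - H j i = cyclePotential H o i - cyclePotential H o j := by
  have := hcycle i j o
  simp only [cyclePotential]
  linear_combination (norm := abel_nf) this

theorem le_swap_iff_cyclePotential_le {H : S → S → α}
    (hcycle : ∀ i j k, H i j + H j k + H k i = H i k + H k j + H j i) (o i j : S) :
    H i j ≤ H j i ↔ cyclePotential H o i ≤ cyclePotential H o j := by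
  rw [← sub_nonpos, sub_swap_eq_cyclePotential_sub hcycle o, sub_nonpos]

end CyclePotential

/-- For hitting times `H` of a finite irreducible reversible Markov chain
(which satisfy the cycle identity), the relation `i ≤ j ↔ H(i,j) ≤ H(j,i)` is
total and transitive (a total pre-order); consequently there exists a "hidden"
state `u` with `H(v,u) ≥ H(u,v)` for every state `v`. -/
theorem hidden_state_exists {S : Type*} [Fintype S] [Nonempty S]
    (H : S → S → ℝ)
    (hcycle : ∀ i j k, H i j + H j k + H k i = H i k + H k j + H j i) :
    (∀ i j, H i j ≤ H j i ∨ H j i ≤ H i j) ∧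
    (∀ i j k, H i j ≤ H j i → H j k ≤ H k j → H i k ≤ H k i) ∧
    (∃ u, ∀ v, H u v ≤ H v u) := by
  have hle := le_swap_iff_cyclePotential_le hcycle
  refine ⟨fun i j => le_total _ _, fun i j k hij hjk => ?_, ?_⟩
  · rw [hle i] at hij hjk ⊢
    exact hij.trans hjk
  · obtain ⟨o⟩ := ‹Nonempty S›
    obtain ⟨u, hu⟩ := Finite.exists_min (cyclePotential H o)
    exact ⟨u, fun v => (hle o u v).2 (hu v)⟩
end

section
/- Under the quantized gossip update with x_i ≥ x_j both multiples of Δ: if x_i − x_j = Δ (trivial average), then the update swaps the two values and the quantity V(x) = ∑_k (x_k − α)² is unchanged for any α; if x_i − x_j > Δ (non-trivial average), then V(x) decreases by at least 2Δ². -/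
open Finset

/-! Write `x i - x j = Δ m` with `m ∈ ℤ`. The quantizer transfers `δ = Δ ⌈m/2⌉` (half the gap when
`m` is even, the upper midpoint when `m` is odd), leaving a gap `x i - x j - δ = Δ ⌊m/2⌋`. Moving `δ`
from `x i` to `x j` changes `V_α` by `-2 δ (x i - x j - δ) = -2 Δ² ⌈m/2⌉ ⌊m/2⌋`, which vanishes for
`m = 1` (the swap) and is at most `-2 Δ²` for `m ≥ 2`. Below, `⌈m/2⌉` and `⌊m/2⌋` appear as the
integer divisions `(m + 1) / 2` and `m / 2`. -/

theorem Fintype.sum_update_eq_add_sub {ι M : Type*} [Fintype ι] [DecidableEq ι] [AddCommGroup M]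
    (f : ι → M) (i : ι) (b : M) :
    ∑ k, Function.update f i b k = ∑ k, f k + (b - f i) := by
  rw [Finset.sum_update_of_mem (mem_univ i), Finset.sum_eq_add_sum_sdiff_singleton_of_mem (mem_univ i) f]
  abel

theorem sum_sq_sub_update_transfer {ι : Type*} [Fintype ι] [DecidableEq ι] {i j : ι} (hij : i ≠ j)
    (x : ι → ℝ) (δ α : ℝ) :
    ∑ k, (Function.update (Function.update x i (x i - δ)) j (x j + δ) k - α) ^ 2
      = ∑ k, (x k - α) ^ 2 - 2 * δ * (x i - x j - δ) := by
  have hcomp : ∀ (y : ι → ℝ) (l : ι) (a : ℝ),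
      (fun k => (Function.update y l a k - α) ^ 2)
        = Function.update (fun k => (y k - α) ^ 2) l ((a - α) ^ 2) :=
    fun y l a => Function.comp_update (fun t => (t - α) ^ 2) y l a
  rw [hcomp, Fintype.sum_update_eq_add_sub, Function.update_of_ne hij.symm, hcomp,
    Fintype.sum_update_eq_add_sub]
  ring

theorem quantized_shift_eq {Δ δ : ℝ} (hΔ : Δ ≠ 0) (m : ℤ)
    (hδ1 : (∃ k : ℤ, Δ * m / (2 * Δ) = (k : ℝ)) → δ = Δ * m / 2)
    (hδ2 : (¬ ∃ k : ℤ, Δ * m / (2 * Δ) = (k : ℝ)) → δ = Δ * ⌊Δ * m / 2 / Δ⌋ + Δ) :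
    δ = Δ * ((m + 1) / 2 : ℤ) := by
  rw [show Δ * m / (2 * Δ) = m / 2 by field_simp] at hδ1 hδ2
  rw [show Δ * m / 2 / Δ = m / 2 by field_simp] at hδ2
  obtain ⟨l, rfl | rfl⟩ := Int.even_or_odd' m
  · rw [hδ1 ⟨l, by push_cast; ring⟩, show (2 * l + 1) / 2 = l by omega]
    push_cast
    ring
  · have hnot : ¬ ∃ k : ℤ, ((2 * l + 1 : ℤ) : ℝ) / 2 = k := by
      rintro ⟨k, hk⟩
      have : 2 * l + 1 = 2 * k := by
        exact_mod_cast (by linarith : ((2 * l + 1 : ℤ) : ℝ) = 2 * k)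
      omega
    have hfloor : ⌊((2 * l + 1 : ℤ) : ℝ) / 2⌋ = l := by
      rw [Int.floor_eq_iff]
      push_cast
      constructor <;> linarith
    rw [hδ2 hnot, hfloor, show (2 * l + 1 + 1) / 2 = l + 1 by omega]
    push_cast
    ring

theorem quantized_update_lyapunov_general (n : ℕ) (Δ : ℝ) (hΔ : 0 < Δ)
    (x : Fin n → ℝ) (hmul : ∀ k, ∃ m : ℤ, x k = Δ * m)
    (i j : Fin n) (hij : i ≠ j) (δ : ℝ)
    (hδ1 : (∃ k : ℤ, (x i - x j) / (2 * Δ) = (k : ℝ)) → δ = (x i - x j) / 2)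
    (hδ2 : (¬ ∃ k : ℤ, (x i - x j) / (2 * Δ) = (k : ℝ)) →
      δ = Δ * ⌊((x i - x j) / 2) / Δ⌋ + Δ)
    (x' : Fin n → ℝ)
    (hx' : x' = Function.update (Function.update x i (x i - δ)) j (x j + δ)) :
    (x i - x j = Δ →
      x' i = x j ∧ x' j = x i ∧
      ∀ α : ℝ, ∑ k, (x' k - α) ^ 2 = ∑ k, (x k - α) ^ 2) ∧
    (Δ < x i - x j →
      ∀ α : ℝ, ∑ k, (x' k - α) ^ 2 ≤ ∑ k, (x k - α) ^ 2 - 2 * Δ ^ 2) := by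
  obtain ⟨mi, hmi⟩ := hmul i
  obtain ⟨mj, hmj⟩ := hmul j
  obtain ⟨m, hd⟩ : ∃ m : ℤ, x i - x j = Δ * m := ⟨mi - mj, by rw [hmi, hmj]; push_cast; ring⟩
  rw [hd] at hδ1 hδ2
  have hδ := quantized_shift_eq hΔ.ne' m hδ1 hδ2
  have hsplit : (m : ℝ) = ((m + 1) / 2 : ℤ) + (m / 2 : ℤ) := by exact_mod_cast (by omega)
  have hV : ∀ α, ∑ k, (x' k - α) ^ 2
      = ∑ k, (x k - α) ^ 2 - 2 * Δ ^ 2 * (((m + 1) / 2 * (m / 2) : ℤ) : ℝ) := by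
    intro α
    rw [hx', sum_sq_sub_update_transfer hij, hd, hδ, hsplit]
    push_cast
    ring
  have hx'i : x' i = x i - δ := by rw [hx', Function.update_of_ne hij, Function.update_self]
  have hx'j : x' j = x j + δ := by rw [hx', Function.update_self]
  constructor
  · intro hgap
    have hm : m = 1 := by exact_mod_cast (mul_eq_left₀ hΔ.ne').mp (hd.symm.trans hgap)
    subst hm
    norm_num at hδ hV
    exact ⟨by linarith, by linarith, hV⟩
  · intro hgap α
    have hm : 1 < m := by
      exact_mod_cast lt_of_mul_lt_mul_left (by rwa [mul_one, ← hd] : Δ * 1 < Δ * m) hΔ.le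
    have hprod : (1 : ℝ) ≤ (((m + 1) / 2 * (m / 2) : ℤ) : ℝ) := by
      exact_mod_cast one_le_mul_of_one_le_of_one_le (by omega) (by omega)
    rw [hV]
    nlinarith

/-- Under the quantized gossip update with `x i ≥ x j` both multiples of `Δ`:
if `x i - x j = Δ` (trivial average) the update swaps the two values and
`V_α(x) = ∑ (x_k - α)²` is unchanged for every `α`; if `x i - x j > Δ`
(non-trivial average) then `V_α` decreases by at least `2Δ²`. -/
theorem quantized_update_lyapunov (n : ℕ) (Δ : ℝ) (hΔ : 0 < Δ)
    (x : Fin n → ℝ) (hmul : ∀ k, ∃ m : ℤ, x k = Δ * m)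
    (i j : Fin n) (hij : i ≠ j) (hord : x j ≤ x i) (δ : ℝ)
    (hδ1 : (∃ k : ℤ, (x i - x j) / (2 * Δ) = (k : ℝ)) → δ = (x i - x j) / 2)
    (hδ2 : (¬ ∃ k : ℤ, (x i - x j) / (2 * Δ) = (k : ℝ)) →
      δ = Δ * ⌊((x i - x j) / 2) / Δ⌋ + Δ)
    (x' : Fin n → ℝ)
    (hx' : x' = Function.update (Function.update x i (x i - δ)) j (x j + δ)) :
    (x i - x j = Δ →
      x' i = x j ∧ x' j = x i ∧
      ∀ α : ℝ, ∑ k, (x' k - α) ^ 2 = ∑ k, (x k - α) ^ 2) ∧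
    (Δ < x i - x j →
      ∀ α : ℝ, ∑ k, (x' k - α) ^ 2 ≤ ∑ k, (x k - α) ^ 2 - 2 * Δ ^ 2) :=
  quantized_update_lyapunov_general n Δ hΔ x hmul i j hij δ hδ1 hδ2 x' hx'
end
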